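/- arXiv:1308.3432 — 2 statements merged into one kernel-verified Lean document; each statement's English description precedes it below -/
import Mathlib

section
/- Let z be a real random variable with the logistic density p(z) = sigm(z)(1 - sigm(z)). For a fixed real number a, define h = max(0, z + a). Then E[h] = softplus(a) = log(1 + exp(a)). -/
noncomputable def sigm (x : ℝ) : ℝ := (1 + Real.exp (-x))⁻¹

/-!
On `z > -a` the integrand is `(z + a) sigm'(z)`. Since `1 - sigm z = sigm (-z)` and
`softplus' = sigm`, integration by parts gives the primitive `-(z + a) sigm (-z) - softplus (-z)`,
which tends to `0` at `+∞` and equals `-softplus a` at `z = -a`.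
-/
open Real MeasureTheory Set Filter Topology

noncomputable def softplus (x : ℝ) : ℝ := log (1 + exp x)

lemma sigm_pos (x : ℝ) : 0 < sigm x := by unfold sigm; positivity

lemma sigm_lt_one (x : ℝ) : sigm x < 1 :=
  inv_lt_one_of_one_lt₀ (lt_add_of_pos_right 1 (exp_pos (-x)))

lemma sigm_mul_one_sub_sigm_nonneg (x : ℝ) : 0 ≤ sigm x * (1 - sigm x) :=
  mul_nonneg (sigm_pos x).le (sub_nonneg.mpr (sigm_lt_one x).le)

lemma one_sub_sigm (x : ℝ) : 1 - sigm x = sigm (-x) := by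
  unfold sigm
  rw [neg_neg, exp_neg]
  field_simp
  ring

lemma sigm_neg (x : ℝ) : sigm (-x) = exp (-x) * sigm x := by
  rw [sigm, sigm, neg_neg, exp_neg]
  field_simp
  ring

lemma hasDerivAt_sigm (x : ℝ) : HasDerivAt sigm (sigm x * (1 - sigm x)) x := by
  refine ((((hasDerivAt_neg x).exp).const_add 1).inv (by positivity)).congr_deriv ?_
  rw [one_sub_sigm, sigm, sigm, neg_neg, exp_neg]
  field_simp
  ring

lemma hasDerivAt_sigm_neg (x : ℝ) :
    HasDerivAt (fun z => sigm (-z)) (-(sigm x * (1 - sigm x))) x := by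
  have h := (hasDerivAt_sigm (-x)).comp x (hasDerivAt_neg x)
  rw [← one_sub_sigm, sub_sub_cancel] at h
  exact h.congr_deriv (by ring)

lemma hasDerivAt_softplus (x : ℝ) : HasDerivAt softplus (sigm x) x := by
  refine (((hasDerivAt_exp x).const_add 1).log (by positivity)).congr_deriv ?_
  rw [sigm, exp_neg]
  field_simp
  ring

lemma tendsto_softplus_atBot : Tendsto softplus atBot (𝓝 0) := by
  have h := ((tendsto_exp_atBot.const_add 1).log (by norm_num : (1 : ℝ) + 0 ≠ 0))
  rw [add_zero, log_one] at h
  exact h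

lemma tendsto_mul_sigm_neg_atTop (a : ℝ) :
    Tendsto (fun z => (z + a) * sigm (-z)) atTop (𝓝 0) := by
  have hexp : Tendsto (fun z => (z + a) * exp (-z)) atTop (𝓝 0) := by
    simpa [add_mul] using (tendsto_pow_mul_exp_neg_atTop_nhds_zero 1).add
      (tendsto_exp_neg_atTop_nhds_zero.const_mul a)
  have hsigm : Tendsto sigm atTop (𝓝 1) := by
    have h := (tendsto_exp_neg_atTop_nhds_zero.const_add 1).inv₀ (by norm_num)
    rw [add_zero, inv_one] at h
    exact h
  simpa [sigm_neg, mul_assoc] using hexp.mul hsigm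

lemma hasDerivAt_neg_mul_sigm_neg_sub_softplus_neg (a x : ℝ) :
    HasDerivAt (fun z => -((z + a) * sigm (-z)) - softplus (-z))
      ((x + a) * (sigm x * (1 - sigm x))) x := by
  refine ((((hasDerivAt_id x).add_const a).mul (hasDerivAt_sigm_neg x)).neg.sub
    ((hasDerivAt_softplus (-x)).comp x (hasDerivAt_neg x))).congr_deriv ?_
  rw [id]
  ring

lemma integral_max_zero_add_mul (a : ℝ) (f : ℝ → ℝ) :
    ∫ z, max 0 (z + a) * f z = ∫ z in Ioi (-a), (z + a) * f z := by
  rw [← setIntegral_eq_integral_of_forall_compl_eq_zero (s := Ioi (-a))]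
  · refine setIntegral_congr_fun measurableSet_Ioi fun z hz => ?_
    rw [max_eq_right (neg_lt_iff_pos_add.mp hz).le]
  · intro z hz
    rw [max_eq_left (by simpa [neg_lt_iff_pos_add] using hz), zero_mul]

/-- For logistic noise `z` and `h = max 0 (z + a)`, the expectation
`E[h] = ∫ max 0 (z+a) · sigm z (1 - sigm z) dz` equals `softplus a = log (1 + exp a)`. -/
theorem noisy_rectifier_expectation (a : ℝ) :
    ∫ z : ℝ, max 0 (z + a) * (sigm z * (1 - sigm z)) = Real.log (1 + Real.exp a) := by
  have hG := hasDerivAt_neg_mul_sigm_neg_sub_softplus_neg a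
  have hlim : Tendsto (fun z => -((z + a) * sigm (-z)) - softplus (-z)) atTop (𝓝 0) := by
    simpa using (tendsto_mul_sigm_neg_atTop a).neg.sub
      (tendsto_softplus_atBot.comp tendsto_neg_atTop_atBot)
  have hnonneg : ∀ z ∈ Ioi (-a), 0 ≤ (z + a) * (sigm z * (1 - sigm z)) := fun z hz =>
    mul_nonneg (neg_lt_iff_pos_add.mp hz).le (sigm_mul_one_sub_sigm_nonneg z)
  rw [integral_max_zero_add_mul, integral_Ioi_of_hasDerivAt_of_nonneg
    (hG (-a)).continuousAt.continuousWithinAt (fun z _ => hG z) hnonneg hlim]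
  simp [softplus]
end

section
/- Let s ∈ (0,1), h ~ Bernoulli(s), L : {0,1} → ℝ, and let L̄* = (1-s)L(1) + sL(0) be the optimal baseline. Then (h-s)(L(h)-L̄*) = s(1-s)(L(1)-L(0)) almost surely, so Var[(h-s)(L(h)-L̄*)] = 0. -/
noncomputable def bExp (s : ℝ) (g : ℝ → ℝ) : ℝ := s * g 1 + (1 - s) * g 0

noncomputable def bVar (s : ℝ) (g : ℝ → ℝ) : ℝ :=
  bExp s (fun h => (g h) ^ 2) - (bExp s g) ^ 2

/-- With the optimal baseline `L̄* = (1-s)L 1 + s L 0`, the optimally-centered estimator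
`(h-s)(L(h)-L̄*)` equals the constant `s(1-s)(L 1 - L 0)` for every `h ∈ {0,1}`; hence
its variance under `h ~ Bernoulli(s)` is zero. -/
theorem sbn_optimal_baseline_zero_variance (s : ℝ) (hs : s ∈ Set.Ioo (0:ℝ) 1)
    (L : ℝ → ℝ) :
    (∀ h : ℝ, h = 0 ∨ h = 1 →
      (h - s) * (L h - ((1 - s) * L 1 + s * L 0)) = s * (1 - s) * (L 1 - L 0)) ∧
    bVar s (fun h => (h - s) * (L h - ((1 - s) * L 1 + s * L 0))) = 0 := by
  constructor
  · rintro h (rfl | rfl) <;> ring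
  · simp only [bVar, bExp]; ring
end
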